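/- arXiv:2605.10506 — 3 statements merged into one kernel-verified Lean document; each statement's English description precedes it below -/
import Mathlib

section
/- For every s with 1/2 < s < 1 there exists a constant C > 0 such that for every Schwartz function f : ℝ³ → ℝ, ‖‖f‖_{L^∞_{x₃}}‖_{L^{2/s}_{x_h}}^{2/s} ≤ C · ‖∂₃f‖_{L²}^{1/s} · ‖‖f‖_{L²_{x₃}}‖_{L^{2/(2s-1)}_{x_h}}^{1/s}. (Intermediate estimate (A.1) in the proof of the appendix lemma.) -/
open MeasureTheory SchwartzMap
open scoped ENNReal

noncomputable section

/-- Partial derivative of a Schwartz function on `ℝ³` in the `i`-th coordinate direction. -/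
def pd3 (i : Fin 3) (f : SchwartzMap (EuclideanSpace ℝ (Fin 3)) ℝ) :
    SchwartzMap (EuclideanSpace ℝ (Fin 3)) ℝ :=
  LineDeriv.lineDerivOpCLM ℝ (SchwartzMap (EuclideanSpace ℝ (Fin 3)) ℝ)
    (EuclideanSpace.single i (1 : ℝ)) f

/-- The `L²` norm (w.r.t. Lebesgue measure on `ℝ³`). -/
def L2 (f : SchwartzMap (EuclideanSpace ℝ (Fin 3)) ℝ) : ℝ :=
  (eLpNorm f 2 volume).toReal

/-- The point of `ℝ³` with horizontal part `xh ∈ ℝ²` and vertical coordinate `x3 ∈ ℝ`. -/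
def emb (xh : EuclideanSpace ℝ (Fin 2)) (x3 : ℝ) : EuclideanSpace ℝ (Fin 3) :=
  (WithLp.equiv 2 (Fin 3 → ℝ)).symm ![xh 0, xh 1, x3]

/-- The mixed norm `‖ ‖f‖_{L^r_{x₃}} ‖_{L^ρ_{x_h}}`: the `L^ρ(ℝ²)` norm (in the horizontal
variable) of the function `x_h ↦ ‖f(x_h, ·)‖_{L^r(ℝ)}`. -/
def mixedNorm (f : EuclideanSpace ℝ (Fin 3) → ℝ) (r ρ : ℝ≥0∞) : ℝ :=
  (eLpNorm (fun xh : EuclideanSpace ℝ (Fin 2) =>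
    (eLpNorm (fun x3 : ℝ => f (emb xh x3)) r volume).toReal) ρ volume).toReal

/-! The one-dimensional Agmon inequality `‖g‖²_{L^∞} ≤ 2 ‖g‖_{L²} ‖g'‖_{L²}`, applied to each
vertical slice `f(x_h, ·)`, gives `‖f(x_h,·)‖²_{L^∞} ≤ 2 ‖∂₃f(x_h,·)‖_{L²} ‖f(x_h,·)‖_{L²}`.
Hölder's inequality in `x_h` with exponents `2` and `2/(2s-1)`, whose reciprocals add up to `s`,
turns this into `‖‖f‖_{L^∞_{x₃}}‖²_{L^{2/s}} ≤ 2 ‖∂₃f‖_{L²} ‖‖f‖_{L²_{x₃}}‖_{L^{2/(2s-1)}}`,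
using Fubini for `‖‖∂₃f‖_{L²_{x₃}}‖_{L²_{x_h}} = ‖∂₃f‖_{L²}`; raising to the power `1/s` gives
`C = 2^{1/s}`.

Since `mixedNorm` is a `toReal`, the right-hand side must be shown finite: `‖f(x_h,·)‖_{L²}` is
bounded in `x_h` and square integrable, hence in every `L^q` with `q ≥ 2`. -/

open Filter Topology Set
open scoped NNReal

theorem eLpNorm_top_sq_le_of_hasDerivAt {g g' : ℝ → ℝ} (hg : ∀ t, HasDerivAt g (g' t) t)
    (hg2 : MemLp g 2) (hg'2 : MemLp g' 2) (hlim : Tendsto g atBot (𝓝 0)) :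
    eLpNorm g ⊤ volume ^ 2 ≤ 2 * (eLpNorm g 2 volume * eLpNorm g' 2 volume) := by
  have hint : Integrable (fun u => g u * g' u) := memLp_one_iff_integrable.1 (hg'2.mul' hg2)
  have hsq (t : ℝ) : g t ^ 2 = ∫ u in Iic t, 2 * (g u * g' u) := by
    have hderiv (u : ℝ) : HasDerivAt (fun u => g u ^ 2) (2 * (g u * g' u)) u :=
      ((hg u).fun_pow 2).congr_deriv (by norm_num; ring)
    rw [integral_Iic_of_hasDerivAt_of_tendsto' (fun u _ => hderiv u)
      (hint.const_mul 2).integrableOn (by simpa using hlim.pow 2), sub_zero]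
  set K := 2 * eLpNorm (fun u => g u * g' u) 1 volume
  have hpt (t : ℝ) : ‖g t‖ₑ ^ (2 : ℝ) ≤ K :=
    calc ‖g t‖ₑ ^ (2 : ℝ) = ‖∫ u in Iic t, 2 * (g u * g' u)‖ₑ := by
          rw [ENNReal.rpow_two, ← enorm_pow, hsq]
      _ ≤ ∫⁻ u in Iic t, ‖2 * (g u * g' u)‖ₑ := enorm_integral_le_lintegral_enorm _
      _ ≤ ∫⁻ u, ‖2 * (g u * g' u)‖ₑ := setLIntegral_le_lintegral _ _
      _ = K := by
          simp_rw [enorm_mul (2 : ℝ), K, eLpNorm_one_eq_lintegral_enorm]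
          rw [lintegral_const_mul' _ _ (by simp)]
          simp [Real.enorm_eq_ofReal]
  have hsup : eLpNorm g ⊤ volume ≤ K ^ (2 : ℝ)⁻¹ :=
    eLpNormEssSup_le_of_ae_enorm_bound
      (ae_of_all _ fun t => (ENNReal.le_rpow_inv_iff two_pos).2 (hpt t))
  calc eLpNorm g ⊤ volume ^ 2 ≤ (K ^ (2 : ℝ)⁻¹) ^ (2 : ℝ) := by
        rw [← ENNReal.rpow_two]; gcongr
    _ = K := ENNReal.rpow_inv_rpow two_ne_zero _
    _ ≤ 2 * (eLpNorm g 2 volume * eLpNorm g' 2 volume) := by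
        gcongr 2 * ?_
        simpa using eLpNorm_le_eLpNorm_mul_eLpNorm'_of_norm hg2.1 hg'2.1 (· * ·) 1
          (ae_of_all _ fun u => by simp [norm_mul]) (p := 2) (q := 2) (r := 1)

theorem eLpNorm_sq_le_mul_of_sq_le_mul {α : Type*} [MeasurableSpace α] {μ : Measure α}
    {p q r : ℝ≥0∞} [ENNReal.HolderTriple p q r] {a b d : α → ℝ} {c : ℝ≥0}
    (hb : AEStronglyMeasurable b μ) (hd : AEStronglyMeasurable d μ)
    (h : ∀ x, a x ^ 2 ≤ c * b x * d x) :
    eLpNorm a (r * 2) μ ^ 2 ≤ c * eLpNorm b p μ * eLpNorm d q μ :=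
  calc eLpNorm a (r * 2) μ ^ 2 = eLpNorm (fun x => ‖a x‖ ^ (2 : ℝ)) r μ := by
        rw [eLpNorm_norm_rpow a two_pos, ENNReal.ofReal_ofNat, ENNReal.rpow_two]
    _ ≤ eLpNorm (fun x => c * b x * d x) r μ :=
        eLpNorm_mono_real fun x => by simpa [Real.rpow_two] using h x
    _ ≤ c * eLpNorm b p μ * eLpNorm d q μ :=
        eLpNorm_le_eLpNorm_mul_eLpNorm'_of_norm hb hd (fun u v => c * u * v) c
          (ae_of_all _ fun x => by simp [norm_mul])

theorem MemLp.of_bound_of_le_exponent {α E : Type*} [MeasurableSpace α] {μ : Measure α}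
    [NormedAddCommGroup E] {f : α → E} {p q : ℝ≥0∞} {C : ℝ} (hf : MemLp f p μ) (hp : p ≠ 0)
    (hpq : p ≤ q) (hC : ∀ᵐ x ∂μ, ‖f x‖ ≤ C) : MemLp f q μ := by
  rcases eq_or_ne q ⊤ with rfl | hq
  · exact memLp_top_of_bound hf.1 C hC
  have hp_top : p ≠ ⊤ := ne_top_of_le_ne_top hq hpq
  have hq0 : q ≠ 0 := (pos_iff_ne_zero.2 hp |>.trans_le hpq).ne'
  have hpq' : p.toReal ≤ q.toReal := ENNReal.toReal_mono hq hpq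
  refine ⟨hf.1, (eLpNorm_lt_top_iff_lintegral_rpow_enorm_lt_top hq0 hq).2 ?_⟩
  have hfp := (eLpNorm_lt_top_iff_lintegral_rpow_enorm_lt_top hp hp_top).1 hf.2
  calc ∫⁻ x, ‖f x‖ₑ ^ q.toReal ∂μ
      ≤ ∫⁻ x, ENNReal.ofReal C ^ (q.toReal - p.toReal) * ‖f x‖ₑ ^ p.toReal ∂μ := by
        refine lintegral_mono_ae (hC.mono fun x hx => ?_)
        nth_rewrite 1 [← sub_add_cancel q.toReal p.toReal]
        rw [ENNReal.rpow_add_of_nonneg _ _ (sub_nonneg.2 hpq') ENNReal.toReal_nonneg]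
        gcongr
        rw [← ofReal_norm]
        exact ENNReal.ofReal_le_ofReal hx
    _ < ⊤ := by
        rw [lintegral_const_mul'' _ (hf.1.enorm.pow_const _)]
        exact ENNReal.mul_lt_top (by finiteness) hfp

theorem eLpNorm_two_rpow_two {α E : Type*} [MeasurableSpace α] {μ : Measure α}
    [NormedAddCommGroup E] (g : α → E) :
    eLpNorm g 2 μ ^ (2 : ℝ) = ∫⁻ x, ‖g x‖ₑ ^ (2 : ℝ) ∂μ := by
  simpa using eLpNorm_nnreal_pow_eq_lintegral (f := g) (μ := μ) (p := 2) two_ne_zero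

theorem toReal_rpow_two_div_le {x a b c : ℝ≥0∞} (h : x ^ 2 ≤ a * b * c) (ha : a ≠ ⊤)
    (hb : b ≠ ⊤) (hc : c ≠ ⊤) {s : ℝ} (hs : 0 < s) :
    x.toReal ^ (2 / s) ≤ a.toReal ^ (1 / s) * b.toReal ^ (1 / s) * c.toReal ^ (1 / s) := by
  simp only [ENNReal.toReal_rpow, ← ENNReal.toReal_mul]
  refine ENNReal.toReal_mono (by finiteness) ?_
  rw [← ENNReal.mul_rpow_of_nonneg _ _ (by positivity),
    ← ENNReal.mul_rpow_of_nonneg _ _ (by positivity), div_eq_mul_one_div 2 s, ENNReal.rpow_mul,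
    ENNReal.rpow_two]
  gcongr

theorem holderTriple_two_ofReal {s : ℝ} (hs : 1 / 2 < s) :
    ENNReal.HolderTriple 2 (ENNReal.ofReal (2 / (2 * s - 1))) (ENNReal.ofReal (1 / s)) := by
  have h2s : 0 < 2 * s - 1 := by linarith
  constructor
  rw [← ENNReal.ofReal_inv_of_pos (by positivity), ← ENNReal.ofReal_inv_of_pos (by positivity),
    ← ENNReal.ofReal_ofNat 2, ← ENNReal.ofReal_inv_of_pos two_pos,
    ← ENNReal.ofReal_add (by norm_num) (by positivity)]
  congr 1
  field_simp
  ring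

theorem SchwartzMap.exists_eLpNorm_comp_le {D E F : Type*} [NormedAddCommGroup D]
    [MeasurableSpace D] [NormedAddCommGroup E] [NormedSpace ℝ E] [NormedAddCommGroup F]
    [NormedSpace ℝ F] (f : 𝓢(E, F)) (p : ℝ≥0∞) (μ : Measure D) [hμ : μ.HasTemperateGrowth] :
    ∃ K : ℝ≥0∞, K ≠ ⊤ ∧ ∀ φ : D → E, (∀ y, ‖y‖ ≤ ‖φ y‖) → eLpNorm (f ∘ φ) p μ ≤ K := by
  obtain ⟨k, hk⟩ := hμ.exists_eLpNorm_lt_top p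
  set S := 2 ^ k * (Finset.Iic (k, 0)).sup (fun m => SchwartzMap.seminorm ℝ m.1 m.2) f
  refine ⟨‖S‖ₑ * eLpNorm (fun y => (1 + ‖y‖) ^ (-k : ℝ)) p μ, by finiteness, fun φ hφ => ?_⟩
  rw [← eLpNorm_const_smul]
  refine eLpNorm_mono_real fun y => ?_
  have hdecay : (1 + ‖φ y‖) ^ k * ‖f (φ y)‖ ≤ S := by
    simpa using f.one_add_le_sup_seminorm_apply (𝕜 := ℝ) (m := (k, 0)) le_rfl le_rfl (φ y)
  have hpos : 0 < (1 + ‖y‖) ^ k := by positivity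
  rw [Function.comp_apply, Pi.smul_apply, smul_eq_mul, Real.rpow_neg (by positivity),
    Real.rpow_natCast, ← div_eq_mul_inv, le_div_iff₀ hpos, mul_comm]
  exact le_trans (by gcongr; exact hφ y) hdecay

theorem continuous_emb : Continuous fun p : EuclideanSpace ℝ (Fin 2) × ℝ => emb p.1 p.2 := by
  refine (PiLp.continuous_toLp 2 _).comp (continuous_pi fun i => ?_)
  fin_cases i <;> simp <;> fun_prop

theorem emb_eq_add_smul (xh : EuclideanSpace ℝ (Fin 2)) (t : ℝ) :
    emb xh t = emb xh 0 + t • EuclideanSpace.single 2 1 := by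
  ext i
  fin_cases i <;> simp [emb]

theorem norm_le_norm_emb (xh : EuclideanSpace ℝ (Fin 2)) (t : ℝ) : ‖t‖ ≤ ‖emb xh t‖ := by
  simpa [emb] using PiLp.norm_apply_le (emb xh t) 2

theorem hasDerivAt_emb (xh : EuclideanSpace ℝ (Fin 2)) (t : ℝ) :
    HasDerivAt (emb xh) (EuclideanSpace.single 2 1) t := by
  rw [funext (emb_eq_add_smul xh)]
  simpa using ((hasDerivAt_id t).smul_const (EuclideanSpace.single (2 : Fin 3) (1 : ℝ))).const_add
    (emb xh 0)

theorem hasDerivAt_comp_emb (f : 𝓢(EuclideanSpace ℝ (Fin 3), ℝ))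
    (xh : EuclideanSpace ℝ (Fin 2)) (t : ℝ) :
    HasDerivAt (fun u => f (emb xh u)) (pd3 2 f (emb xh t)) t := by
  have h := f.differentiableAt.hasFDerivAt.comp_hasDerivAt t (hasDerivAt_emb xh t)
  simp only [pd3, LineDeriv.lineDerivOpCLM_apply, SchwartzMap.lineDerivOp_apply_eq_fderiv]
  exact h

theorem tendsto_emb_atBot (xh : EuclideanSpace ℝ (Fin 2)) :
    Tendsto (emb xh) atBot (cocompact _) := by
  rw [← Metric.cobounded_eq_cocompact, ← tendsto_norm_atTop_iff_cobounded]
  exact tendsto_atTop_mono (norm_le_norm_emb xh)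
    (tendsto_abs_atBot_atTop.congr fun t => (Real.norm_eq_abs t).symm)

theorem lintegral_comp_emb {F : EuclideanSpace ℝ (Fin 3) → ℝ≥0∞} (hF : Measurable F) :
    ∫⁻ xh : EuclideanSpace ℝ (Fin 2), ∫⁻ t : ℝ, F (emb xh t) = ∫⁻ x, F x := by
  let e2 := (MeasurableEquiv.toLp 2 (Fin 2 → ℝ)).symm
  let Φ : ℝ × (Fin 2 → ℝ) → EuclideanSpace ℝ (Fin 3) := fun p =>
    MeasurableEquiv.toLp 2 (Fin 3 → ℝ) ((MeasurableEquiv.piFinSuccAbove (fun _ => ℝ) 2).symm p)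
  have hΦ : MeasurePreserving Φ volume volume :=
    (EuclideanSpace.volume_preserving_symm_measurableEquiv_toLp (Fin 3)).symm.comp
      (volume_preserving_piFinSuccAbove (fun _ : Fin 3 => ℝ) 2).symm
  have hΦemb : MeasurableEmbedding Φ :=
    (MeasurableEquiv.toLp 2 (Fin 3 → ℝ)).measurableEmbedding.comp
      (MeasurableEquiv.piFinSuccAbove (fun _ : Fin 3 => ℝ) 2).symm.measurableEmbedding
  have hΦ_emb (xh : EuclideanSpace ℝ (Fin 2)) (t : ℝ) : Φ (t, e2 xh) = emb xh t := by
    ext i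
    fin_cases i <;> simp [Φ, e2, emb, MeasurableEquiv.piFinSuccAbove_symm_apply, Fin.insertNth,
      Fin.succAboveCases]
  calc ∫⁻ xh, ∫⁻ t, F (emb xh t) = ∫⁻ xh, ∫⁻ t, F (Φ (t, e2 xh)) := by simp_rw [hΦ_emb]
    _ = ∫⁻ y : Fin 2 → ℝ, ∫⁻ t, F (Φ (t, y)) :=
        (EuclideanSpace.volume_preserving_symm_measurableEquiv_toLp (Fin 2)).lintegral_comp_emb
          e2.measurableEmbedding (fun y => ∫⁻ t, F (Φ (t, y)))
    _ = ∫⁻ p, F (Φ p) := (lintegral_prod_symm _ (hF.comp hΦemb.measurable).aemeasurable).symm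
    _ = ∫⁻ x, F x := hΦ.lintegral_comp_emb hΦemb F

def sliceNorm (f : EuclideanSpace ℝ (Fin 3) → ℝ) (r : ℝ≥0∞) (xh : EuclideanSpace ℝ (Fin 2)) :
    ℝ :=
  (eLpNorm (fun x3 => f (emb xh x3)) r volume).toReal

theorem mixedNorm_eq_eLpNorm_sliceNorm (f : EuclideanSpace ℝ (Fin 3) → ℝ) (r ρ : ℝ≥0∞) :
    mixedNorm f r ρ = (eLpNorm (sliceNorm f r) ρ volume).toReal := rfl

theorem measurable_sliceNorm {f : EuclideanSpace ℝ (Fin 3) → ℝ} (hf : Measurable f) {r : ℝ≥0∞}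
    (hr : r ≠ ⊤) : Measurable (sliceNorm f r) := by
  unfold sliceNorm
  rcases eq_or_ne r 0 with rfl | hr0
  · simp
  simp only [eLpNorm_eq_lintegral_rpow_enorm_toReal hr0 hr]
  refine ENNReal.measurable_toReal.comp ((Measurable.lintegral_prod_right ?_).pow_const _)
  exact ((hf.comp continuous_emb.measurable).enorm).pow_const _

theorem eLpNorm_sliceNorm_two {f : EuclideanSpace ℝ (Fin 3) → ℝ} (hf : Measurable f)
    (hfin : ∀ xh, eLpNorm (fun t => f (emb xh t)) 2 volume ≠ ⊤) :
    eLpNorm (sliceNorm f 2) 2 volume = eLpNorm f 2 volume := by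
  refine ENNReal.rpow_left_injective two_ne_zero ?_
  simp only [eLpNorm_two_rpow_two, sliceNorm, Real.enorm_toReal (hfin _)]
  exact lintegral_comp_emb (hf.enorm.pow_const _)

namespace SchwartzMap

variable (f : 𝓢(EuclideanSpace ℝ (Fin 3), ℝ))

theorem exists_eLpNorm_comp_emb_le (p : ℝ≥0∞) :
    ∃ K : ℝ≥0∞, K ≠ ⊤ ∧ ∀ xh, eLpNorm (fun t => f (emb xh t)) p volume ≤ K := by
  obtain ⟨K, hK, hle⟩ := f.exists_eLpNorm_comp_le p (volume : Measure ℝ)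
  exact ⟨K, hK, fun xh => hle _ (norm_le_norm_emb xh)⟩

theorem memLp_comp_emb (p : ℝ≥0∞) (xh : EuclideanSpace ℝ (Fin 2)) :
    MemLp (fun t => f (emb xh t)) p volume := by
  obtain ⟨K, hK, hle⟩ := f.exists_eLpNorm_comp_emb_le p
  exact ⟨(f.continuous.comp (continuous_emb.comp (.prodMk_right xh))).aestronglyMeasurable,
    (hle xh).trans_lt hK.lt_top⟩

theorem eLpNorm_sliceNorm_two :
    eLpNorm (sliceNorm f 2) 2 volume = eLpNorm f 2 volume :=
  _root_.eLpNorm_sliceNorm_two f.continuous.measurable fun xh => (f.memLp_comp_emb 2 xh).2.ne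

theorem memLp_sliceNorm_two {q : ℝ≥0∞} (hq : 2 ≤ q) : MemLp (sliceNorm f 2) q volume := by
  obtain ⟨K, hK, hle⟩ := f.exists_eLpNorm_comp_emb_le 2
  refine MemLp.of_bound_of_le_exponent (p := 2) (C := K.toReal) ⟨?_, ?_⟩ two_ne_zero hq
    (ae_of_all _ fun xh => ?_)
  · exact (measurable_sliceNorm f.continuous.measurable ENNReal.ofNat_ne_top).aestronglyMeasurable
  · rw [f.eLpNorm_sliceNorm_two]
    exact (f.memLp 2 volume).eLpNorm_lt_top
  · simpa [sliceNorm] using ENNReal.toReal_mono hK (hle xh)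

theorem sliceNorm_top_sq_le (xh : EuclideanSpace ℝ (Fin 2)) :
    sliceNorm f ⊤ xh ^ 2 ≤ 2 * sliceNorm (pd3 2 f) 2 xh * sliceNorm f 2 xh := by
  have h := eLpNorm_top_sq_le_of_hasDerivAt (hasDerivAt_comp_emb f xh) (f.memLp_comp_emb 2 xh)
    ((pd3 2 f).memLp_comp_emb 2 xh) (f.tendsto_cocompact.comp (tendsto_emb_atBot xh))
  have hfin : 2 * (eLpNorm (fun t => f (emb xh t)) 2 volume *
      eLpNorm (fun t => pd3 2 f (emb xh t)) 2 volume) ≠ ⊤ := by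
    finiteness [(f.memLp_comp_emb 2 xh).2, ((pd3 2 f).memLp_comp_emb 2 xh).2]
  have h' := ENNReal.toReal_mono hfin h
  simp only [ENNReal.toReal_mul, ENNReal.toReal_pow, ENNReal.toReal_ofNat] at h'
  unfold sliceNorm
  linarith

end SchwartzMap

/-- Intermediate estimate (A.1): for `1/2 < s < 1`,
`‖‖f‖_{L^∞_{x₃}}‖_{L^{2/s}_{x_h}}^{2/s} ≲ ‖∂₃f‖_{L²}^{1/s} ‖‖f‖_{L²_{x₃}}‖_{L^{2/(2s-1)}_{x_h}}^{1/s}`. -/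
theorem mixed_norm_intermediate_A1 :
    ∀ s : ℝ, 1/2 < s → s < 1 →
      ∃ C : ℝ, 0 < C ∧ ∀ f : SchwartzMap (EuclideanSpace ℝ (Fin 3)) ℝ,
        mixedNorm f ⊤ (ENNReal.ofReal (2/s)) ^ (2/s) ≤
          C * L2 (pd3 2 f) ^ (1/s) *
            mixedNorm f 2 (ENNReal.ofReal (2/(2*s - 1))) ^ (1/s) := by
  intro s hs1 _
  have hs : 0 < s := by linarith
  refine ⟨2 ^ (1 / s), by positivity, fun f => ?_⟩
  have := holderTriple_two_ofReal hs1
  have hq : 2 ≤ ENNReal.ofReal (2 / (2 * s - 1)) := by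
    rw [← ENNReal.ofReal_ofNat 2]
    exact ENNReal.ofReal_le_ofReal (by rw [le_div_iff₀ (by linarith)]; linarith)
  have hLq := f.memLp_sliceNorm_two hq
  have hHolder := eLpNorm_sq_le_mul_of_sq_le_mul (p := 2) (q := ENNReal.ofReal (2 / (2 * s - 1)))
    (r := ENNReal.ofReal (1 / s)) (c := 2) ((pd3 2 f).memLp_sliceNorm_two le_rfl).1 hLq.1
    (fun xh => by exact_mod_cast f.sliceNorm_top_sq_le xh)
  have hexp : ENNReal.ofReal (1 / s) * 2 = ENNReal.ofReal (2 / s) := by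
    rw [← ENNReal.ofReal_ofNat 2, ← ENNReal.ofReal_mul (by positivity)]
    ring_nf
  rw [hexp, (pd3 2 f).eLpNorm_sliceNorm_two, ENNReal.coe_ofNat] at hHolder
  have := toReal_rpow_two_div_le hHolder (by simp) ((pd3 2 f).memLp 2 volume).eLpNorm_lt_top.ne
    hLq.2.ne hs
  rwa [ENNReal.toReal_ofNat, ← mixedNorm_eq_eLpNorm_sliceNorm,
    ← mixedNorm_eq_eLpNorm_sliceNorm] at this

end
end

section
/- Let 0 < σ < s, κ > 0 and M ≥ 0. Let E : [0,∞) → ℝ be differentiable and D : [0,∞) → ℝ continuous with D(t) ≥ 0, E′(t) + κ·D(t) ≤ 0, and (1+t)^s·E(t) ≤ M for all t ≥ 0. Then for every t ≥ 0, (1+t)^σ·E(t) + κ·∫₀ᵗ (1+τ)^σ D(τ) dτ ≤ E(0) + σ·M/(s−σ). (Time-weighted dissipation estimate, the abstract content of the last lemma of Section 3.5.) -/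
/-!
Differentiating the weighted energy gives
`((1+t)^σ E)' = σ (1+t)^(σ-1) E + (1+t)^σ E' ≤ σ (1+t)^(σ-1) E - κ (1+t)^σ D`,
so integrating over `[0,t]` bounds `(1+t)^σ E(t) - E(0) + κ ∫₀ᵗ (1+τ)^σ D` by
`σ ∫₀ᵗ (1+τ)^(σ-1) E`. The decay hypothesis turns the integrand into at most
`M (1+τ)^(σ-s-1)`, whose integral over `[0,∞)` is `M/(s-σ)` because `σ < s`.
-/

open Set MeasureTheory intervalIntegral

theorem continuousOn_one_add_rpow (p : ℝ) : ContinuousOn (fun τ : ℝ => (1 + τ) ^ p) (Ici 0) :=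
  (continuous_const.add continuous_id).continuousOn.rpow_const fun _ hx =>
    Or.inl (by dsimp; linarith [mem_Ici.1 hx])

theorem HasDerivWithinAt.one_add_rpow_mul {E : ℝ → ℝ} {e σ x : ℝ} {S : Set ℝ}
    (hE : HasDerivWithinAt E e S x) (hx : 1 + x ≠ 0) :
    HasDerivWithinAt (fun τ => (1 + τ) ^ σ * E τ)
      (σ * (1 + x) ^ (σ - 1) * E x + (1 + x) ^ σ * e) S x := by
  have hpow : HasDerivWithinAt (fun τ => (1 + τ) ^ σ) (σ * (1 + x) ^ (σ - 1)) S x := by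
    simpa using ((hasDerivWithinAt_id x S).const_add 1).rpow_const (p := σ) (Or.inl hx)
  exact hpow.mul hE

theorem integral_one_add_rpow_sub_sub_one {σ s t : ℝ} (hσs : σ < s) (ht : 0 ≤ t) :
    ∫ τ in (0:ℝ)..t, (1 + τ) ^ (σ - s - 1) = (1 - (1 + t) ^ (σ - s)) / (s - σ) := by
  have hshift : ∫ τ in (0:ℝ)..t, (1 + τ) ^ (σ - s - 1) =
      ∫ x in (1:ℝ)..1 + t, x ^ (σ - s - 1) := by
    simpa using integral_comp_add_left (fun x : ℝ => x ^ (σ - s - 1)) (1 : ℝ) (a := 0) (b := t)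
  have hzero : (0 : ℝ) ∉ uIcc 1 (1 + t) := by
    rw [uIcc_of_le (by linarith)]
    exact fun h => absurd h.1 (by norm_num)
  rw [hshift, integral_rpow (Or.inr ⟨by linarith, hzero⟩), sub_add_cancel, Real.one_rpow]
  rw [div_eq_div_iff (by linarith) (by linarith)]
  ring

theorem integral_one_add_rpow_mul_le_of_decay {σ s M t : ℝ} {E : ℝ → ℝ} (hσs : σ < s)
    (hM : 0 ≤ M) (ht : 0 ≤ t) (hE : ContinuousOn E (Icc 0 t))
    (hdecay : ∀ τ ∈ Icc 0 t, (1 + τ) ^ s * E τ ≤ M) :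
    ∫ τ in (0:ℝ)..t, (1 + τ) ^ (σ - 1) * E τ ≤ M / (s - σ) := by
  have hIcc : Icc 0 t ⊆ Ici (0 : ℝ) := Icc_subset_Ici_self
  have hpointwise :
      ∀ τ ∈ Icc 0 t, (1 + τ) ^ (σ - 1) * E τ ≤ M * (1 + τ) ^ (σ - s - 1) := by
    intro τ hτ
    have hbase : 0 < 1 + τ := by linarith [hτ.1]
    calc (1 + τ) ^ (σ - 1) * E τ = (1 + τ) ^ (σ - s - 1) * ((1 + τ) ^ s * E τ) := by
          rw [← mul_assoc, ← Real.rpow_add hbase]; ring_nf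
      _ ≤ (1 + τ) ^ (σ - s - 1) * M :=
          mul_le_mul_of_nonneg_left (hdecay τ hτ) (Real.rpow_nonneg hbase.le _)
      _ = M * (1 + τ) ^ (σ - s - 1) := mul_comm _ _
  have hmono : ∫ τ in (0:ℝ)..t, (1 + τ) ^ (σ - 1) * E τ ≤
      ∫ τ in (0:ℝ)..t, M * (1 + τ) ^ (σ - s - 1) := integral_mono_on ht
    ((((continuousOn_one_add_rpow _).mono hIcc).mul hE).intervalIntegrable_of_Icc
      (μ := volume) ht)
    ((continuousOn_const.mul ((continuousOn_one_add_rpow _).mono hIcc)).intervalIntegrable_of_Icc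
      (μ := volume) ht)
    hpointwise
  rw [intervalIntegral.integral_const_mul, integral_one_add_rpow_sub_sub_one hσs ht] at hmono
  have hweight : 0 ≤ (1 + t) ^ (σ - s) := Real.rpow_nonneg (by linarith) _
  calc _ ≤ M * ((1 - (1 + t) ^ (σ - s)) / (s - σ)) := hmono
    _ ≤ M * (1 / (s - σ)) := by gcongr; linarith
    _ = M / (s - σ) := mul_one_div M _

theorem one_add_rpow_mul_add_integral_le {σ κ t : ℝ} {E E' D : ℝ → ℝ} (ht : 0 ≤ t)
    (hEcont : ContinuousOn E (Icc 0 t)) (hDcont : ContinuousOn D (Icc 0 t))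
    (hderiv : ∀ x ∈ Ioo 0 t, HasDerivWithinAt E (E' x) (Ioi x) x)
    (hineq : ∀ x ∈ Ioo 0 t, E' x + κ * D x ≤ 0) :
    (1 + t) ^ σ * E t + κ * ∫ τ in (0:ℝ)..t, (1 + τ) ^ σ * D τ ≤
      E 0 + σ * ∫ τ in (0:ℝ)..t, (1 + τ) ^ (σ - 1) * E τ := by
  have hIcc : Icc 0 t ⊆ Ici (0 : ℝ) := Icc_subset_Ici_self
  have hEw : ContinuousOn (fun τ => (1 + τ) ^ (σ - 1) * E τ) (Icc 0 t) :=
    ((continuousOn_one_add_rpow _).mono hIcc).mul hEcont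
  have hDw : ContinuousOn (fun τ => (1 + τ) ^ σ * D τ) (Icc 0 t) :=
    ((continuousOn_one_add_rpow _).mono hIcc).mul hDcont
  have henergy : (1 + t) ^ σ * E t - (1 + 0) ^ σ * E 0 ≤
      ∫ τ in (0:ℝ)..t, (σ * ((1 + τ) ^ (σ - 1) * E τ) - κ * ((1 + τ) ^ σ * D τ)) := by
    refine sub_le_integral_of_hasDeriv_right_of_le ht
      (((continuousOn_one_add_rpow σ).mono hIcc).mul hEcont)
      (fun x hx => (hderiv x hx).one_add_rpow_mul (by linarith [hx.1]))
      ((hEw.const_smul σ).sub (hDw.const_smul κ)).integrableOn_Icc fun x hx => ?_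
    have := mul_nonpos_of_nonneg_of_nonpos (Real.rpow_nonneg (by linarith [hx.1] : 0 ≤ 1 + x) σ)
      (hineq x hx)
    linarith
  rw [integral_sub ((hEw.intervalIntegrable_of_Icc ht).const_mul σ)
      ((hDw.intervalIntegrable_of_Icc ht).const_mul κ),
    intervalIntegral.integral_const_mul, intervalIntegral.integral_const_mul,
    add_zero, Real.one_rpow, one_mul] at henergy
  linarith

theorem time_weighted_dissipation_general (σ s κ M : ℝ)
    (hσ : 0 < σ) (hσs : σ < s) (hM : 0 ≤ M)
    (E E' D : ℝ → ℝ)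
    (hDcont : ContinuousOn D (Set.Ici 0))
    (hderiv : ∀ t, 0 ≤ t → HasDerivWithinAt E (E' t) (Set.Ici 0) t)
    (hineq : ∀ t, 0 ≤ t → E' t + κ * D t ≤ 0)
    (hdecay : ∀ t, 0 ≤ t → (1 + t) ^ s * E t ≤ M) :
    ∀ t, 0 ≤ t →
      (1 + t) ^ σ * E t + κ * (∫ τ in (0:ℝ)..t, (1 + τ) ^ σ * D τ) ≤
        E 0 + σ * M / (s - σ) := by
  intro t ht
  have hIcc : Icc 0 t ⊆ Ici (0 : ℝ) := Icc_subset_Ici_self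
  have hEcont : ContinuousOn E (Icc 0 t) := fun x hx =>
    (hderiv x (hIcc hx)).continuousWithinAt.mono hIcc
  have henergy := one_add_rpow_mul_add_integral_le (σ := σ) ht hEcont (hDcont.mono hIcc)
    (fun x hx => (hderiv x hx.1.le).mono (Ioi_subset_Ici hx.1.le)) fun x hx => hineq x hx.1.le
  have hdecay_integral := integral_one_add_rpow_mul_le_of_decay (σ := σ) hσs hM ht hEcont
    fun τ hτ => hdecay τ hτ.1
  calc _ ≤ E 0 + σ * ∫ τ in (0:ℝ)..t, (1 + τ) ^ (σ - 1) * E τ := henergy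
    _ ≤ E 0 + σ * (M / (s - σ)) := by gcongr
    _ = E 0 + σ * M / (s - σ) := by rw [mul_div_assoc]

/-- Time-weighted dissipation estimate: if `E' + κ D ≤ 0` on `[0,∞)`, `D ≥ 0` is continuous,
and `(1+t)^s E(t) ≤ M`, then for `0 < σ < s`,
`(1+t)^σ E(t) + κ ∫₀ᵗ (1+τ)^σ D(τ) dτ ≤ E(0) + σ M/(s-σ)`. -/
theorem time_weighted_dissipation (σ s κ M : ℝ)
    (hσ : 0 < σ) (hσs : σ < s) (hκ : 0 < κ) (hM : 0 ≤ M)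
    (E E' D : ℝ → ℝ)
    (hD : ∀ t, 0 ≤ t → 0 ≤ D t) (hDcont : ContinuousOn D (Set.Ici 0))
    (hderiv : ∀ t, 0 ≤ t → HasDerivWithinAt E (E' t) (Set.Ici 0) t)
    (hineq : ∀ t, 0 ≤ t → E' t + κ * D t ≤ 0)
    (hdecay : ∀ t, 0 ≤ t → (1 + t) ^ s * E t ≤ M) :
    ∀ t, 0 ≤ t →
      (1 + t) ^ σ * E t + κ * (∫ τ in (0:ℝ)..t, (1 + τ) ^ σ * D τ) ≤
        E 0 + σ * M / (s - σ) :=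
  time_weighted_dissipation_general σ s κ M hσ hσs hM E E' D hDcont hderiv hineq hdecay
end

section
/- For every integer m ≥ 0 there exists a constant C > 0 such that for every Schwartz function f : ℝ³ → ℝ, Σ_{α∈ℕ³, |α|≤m} ‖∂^α f‖_{L²}² ≤ C·( Σ_{α∈ℕ³, α₃=0, |α|≤m} ‖∂^α f‖_{L²}² + ‖∂₃^m f‖_{L²}² ). (The full H^m norm is controlled by the tangential norm H^m_tan together with the pure vertical derivative ∂₃^m; this is the norm equivalence asserted at the start of Section 3.1.) -/
open MeasureTheory SchwartzMap

noncomputable section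

/-- Iterated partial derivative `∂₁^a ∂₂^b ∂₃^c f`. -/
def dmix (a b c : ℕ) (f : SchwartzMap (EuclideanSpace ℝ (Fin 3)) ℝ) :
    SchwartzMap (EuclideanSpace ℝ (Fin 3)) ℝ :=
  (pd3 0)^[a] ((pd3 1)^[b] ((pd3 2)^[c] f))

/-- Multi-indices `α = (α₁, α₂, α₃) ∈ ℕ³` with `|α| ≤ m`. -/
def multiIdx3 (m : ℕ) : Finset (ℕ × ℕ × ℕ) :=
  ((Finset.range (m+1)) ×ˢ (Finset.range (m+1)) ×ˢ (Finset.range (m+1))).filter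
    (fun a => a.1 + a.2.1 + a.2.2 ≤ m)

/-- Tangential multi-indices `α = (α₁, α₂)` (i.e. `α₃ = 0`) with `|α| ≤ m`. -/
def multiIdx2 (m : ℕ) : Finset (ℕ × ℕ) :=
  ((Finset.range (m+1)) ×ˢ (Finset.range (m+1))).filter (fun a => a.1 + a.2 ≤ m)

/-! For Schwartz functions, integration by parts and the symmetry of second derivatives give
`‖∂_v ∂_w u‖² = ⟪∂_w² u, ∂_v² u⟫ ≤ ‖∂_v² u‖ ‖∂_w² u‖` and `‖∂_v g‖² ≤ ‖g‖ ‖∂_v² g‖` in `L²`.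
By AM-GM the sequences `t ↦ ‖∂_v^(s-t) ∂_w^t u‖` and `t ↦ ‖∂_v^t g‖` are then discretely convex,
so they are bounded by the larger of their two endpoint values. Interpolating first between
`∂₁` and `∂₃`, then between `∂₂` and `∂₃`, and finally along `∂₃` alone bounds every
`‖∂^α f‖` with `|α| ≤ m` by a tangential norm or by `‖∂₃^m f‖`. -/

open LineDeriv

theorem le_max_of_two_mul_le_add {x : ℕ → ℝ} {n : ℕ}
    (hx : ∀ t, t + 2 ≤ n → 2 * x (t + 1) ≤ x t + x (t + 2)) :
    ∀ t ≤ n, x t ≤ max (x 0) (x n) := by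
  induction n with
  | zero => intro t ht; simp [Nat.le_zero.mp ht]
  | succ n ih =>
    have ih := ih fun t ht => hx t (by omega)
    have hlast : x n ≤ max (x 0) (x (n + 1)) := by
      rcases n with _ | n
      · exact le_max_left _ _
      rcases le_or_gt (x (n + 1)) (x 0) with h | h
      · exact le_max_of_le_left h
      · have hprev := ih n (by omega)
        rw [max_eq_right h.le] at hprev
        exact le_max_of_le_right (by linarith [hx n le_rfl])
    intro t ht
    rcases Nat.of_le_succ ht with ht | rfl
    · exact (ih t ht).trans (max_le (le_max_left _ _) hlast)
    · exact le_max_right _ _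

namespace SchwartzMap

variable {E F : Type*} [NormedAddCommGroup E] [NormedSpace ℝ E]

theorem lineDerivOp_commute [NormedAddCommGroup F] [NormedSpace ℝ F] (v w : E) :
    Function.Commute (∂_{v} : 𝓢(E, F) → 𝓢(E, F)) ∂_{w} := by
  intro f
  ext x
  have hdiff : DifferentiableAt ℝ (fderiv ℝ f) x :=
    ((f.smooth ⊤).fderiv_right (m := 1) (by norm_cast)).differentiable (by norm_cast) x
  have hw : ⇑(∂_{w} f : 𝓢(E, F)) = fun y => fderiv ℝ f y w := rfl
  have hv : ⇑(∂_{v} f : 𝓢(E, F)) = fun y => fderiv ℝ f y v := rfl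
  simp only [lineDerivOp_apply_eq_fderiv, hw, hv, fderiv_clm_apply hdiff (differentiableAt_const _)]
  simpa using (f.smooth 2).contDiffAt.isSymmSndFDerivAt (x := x) (by simp) v w

variable [FiniteDimensional ℝ E] [MeasurableSpace E] [BorelSpace E] {μ : Measure E}
  [μ.IsAddHaarMeasure] [NormedAddCommGroup F] [InnerProductSpace ℝ F]

theorem real_inner_toL2_toL2_eq (f g : 𝓢(E, F)) :
    inner ℝ (f.toLp 2 μ) (g.toLp 2 μ) = ∫ x, inner ℝ (f x) (g x) ∂μ := by
  apply integral_congr_ae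
  filter_upwards [f.coeFn_toLp 2 μ, g.coeFn_toLp 2 μ] with _ hf hg
  rw [hf, hg]

theorem inner_lineDerivOp_toL2_left (v : E) (f g : 𝓢(E, F)) :
    inner ℝ ((∂_{v} f).toLp 2 μ) (g.toLp 2 μ) = -inner ℝ (f.toLp 2 μ) ((∂_{v} g).toLp 2 μ) := by
  have h := integral_bilinear_lineDerivOp_right_eq_neg_left (μ := μ) f g (innerSL ℝ) v
  simp only [innerSL_apply_apply ℝ] at h
  rw [real_inner_toL2_toL2_eq, real_inner_toL2_toL2_eq, h, neg_neg]

theorem inner_lineDerivOp_toL2_swap (v w : E) (f g : 𝓢(E, F)) :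
    inner ℝ ((∂_{v} f).toLp 2 μ) ((∂_{w} g).toLp 2 μ) =
      inner ℝ ((∂_{w} f).toLp 2 μ) ((∂_{v} g).toLp 2 μ) := by
  rw [inner_lineDerivOp_toL2_left, lineDerivOp_commute v w g, ← inner_lineDerivOp_toL2_left]

theorem norm_toL2_lineDerivOp_sq_le (v : E) (g : 𝓢(E, F)) :
    ‖(∂_{v} g).toLp 2 μ‖ ^ 2 ≤ ‖g.toLp 2 μ‖ * ‖(∂_{v} (∂_{v} g)).toLp 2 μ‖ := by
  rw [← real_inner_self_eq_norm_sq, inner_lineDerivOp_toL2_left]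
  exact (neg_le_abs _).trans (abs_real_inner_le_norm _ _)

theorem norm_toL2_lineDerivOp_lineDerivOp_sq_le (v w : E) (u : 𝓢(E, F)) :
    ‖(∂_{v} (∂_{w} u)).toLp 2 μ‖ ^ 2 ≤
      ‖(∂_{v} (∂_{v} u)).toLp 2 μ‖ * ‖(∂_{w} (∂_{w} u)).toLp 2 μ‖ := by
  rw [← real_inner_self_eq_norm_sq]
  nth_rw 2 [lineDerivOp_commute v w u]
  rw [inner_lineDerivOp_toL2_swap, real_inner_comm]
  exact (le_abs_self _).trans (abs_real_inner_le_norm _ _)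

theorem norm_toL2_iterate_lineDerivOp_le_max (v : E) (g : 𝓢(E, F)) {n t : ℕ} (ht : t ≤ n) :
    ‖((∂_{v})^[t] g).toLp 2 μ‖ ≤ max ‖g.toLp 2 μ‖ ‖((∂_{v})^[n] g).toLp 2 μ‖ := by
  refine le_max_of_two_mul_le_add (x := fun t => ‖((∂_{v})^[t] g).toLp 2 μ‖) (fun t _ => ?_) t ht
  simp only [Function.iterate_succ_apply']
  exact two_mul_le_add_of_sq_le_mul (norm_nonneg _) (norm_nonneg _)
    (norm_toL2_lineDerivOp_sq_le v _)

theorem norm_toL2_iterate_mixed_le_max (v w : E) (u : 𝓢(E, F)) {s t : ℕ} (ht : t ≤ s) :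
    ‖((∂_{v})^[s - t] ((∂_{w})^[t] u)).toLp 2 μ‖ ≤
      max ‖((∂_{v})^[s] u).toLp 2 μ‖ ‖((∂_{w})^[s] u).toLp 2 μ‖ := by
  have hconvex : ∀ t, t + 2 ≤ s → 2 * ‖((∂_{v})^[s - (t + 1)] ((∂_{w})^[t + 1] u)).toLp 2 μ‖ ≤
      ‖((∂_{v})^[s - t] ((∂_{w})^[t] u)).toLp 2 μ‖ +
        ‖((∂_{v})^[s - (t + 2)] ((∂_{w})^[t + 2] u)).toLp 2 μ‖ := by
    intro t hts
    obtain ⟨k, rfl⟩ : ∃ k, s = k + t + 2 := ⟨s - (t + 2), by omega⟩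
    have h0 : k + t + 2 - t = k + 2 := by omega
    have h1 : k + t + 2 - (t + 1) = k + 1 := by omega
    have h2 : k + t + 2 - (t + 2) = k := by omega
    have hcomm := (lineDerivOp_commute (F := F) w v).iterate_right k
    simp only [h0, h1, h2, Function.iterate_succ_apply', ← hcomm _]
    exact two_mul_le_add_of_sq_le_mul (norm_nonneg _) (norm_nonneg _)
      (norm_toL2_lineDerivOp_lineDerivOp_sq_le v w _)
  simpa using le_max_of_two_mul_le_add
    (x := fun t => ‖((∂_{v})^[s - t] ((∂_{w})^[t] u)).toLp 2 μ‖) hconvex t ht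

end SchwartzMap

lemma pd3_eq_lineDerivOp (i : Fin 3) :
    pd3 i = ∂_{EuclideanSpace.single i (1 : ℝ)} := rfl

lemma pd3_commute (i j : Fin 3) : Function.Commute (pd3 i) (pd3 j) :=
  lineDerivOp_commute _ _

lemma L2_eq_norm_toLp (f : 𝓢(EuclideanSpace ℝ (Fin 3), ℝ)) : L2 f = ‖f.toLp 2‖ :=
  norm_toLp.symm

lemma L2_dmix_le_max (a b c : ℕ) (f : 𝓢(EuclideanSpace ℝ (Fin 3), ℝ)) :
    L2 (dmix a b c f) ≤ max (L2 (dmix (a + c) b 0 f)) (L2 (dmix 0 b (a + c) f)) := by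
  have h := norm_toL2_iterate_mixed_le_max (μ := volume) (EuclideanSpace.single 0 (1 : ℝ))
    (EuclideanSpace.single 2 1) ((pd3 1)^[b] f) (Nat.le_add_left c a)
  simp only [Nat.add_sub_cancel, ← pd3_eq_lineDerivOp, ← L2_eq_norm_toLp] at h
  rwa [(pd3_commute 2 1).iterate_iterate c b f, (pd3_commute 2 1).iterate_iterate (a + c) b f] at h

lemma L2_dmix_zero_le_max (b c : ℕ) (f : 𝓢(EuclideanSpace ℝ (Fin 3), ℝ)) :
    L2 (dmix 0 b c f) ≤ max (L2 (dmix 0 (b + c) 0 f)) (L2 (dmix 0 0 (b + c) f)) := by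
  have h := norm_toL2_iterate_mixed_le_max (μ := volume) (EuclideanSpace.single 1 (1 : ℝ))
    (EuclideanSpace.single 2 1) f (Nat.le_add_left c b)
  simp only [Nat.add_sub_cancel, ← pd3_eq_lineDerivOp, ← L2_eq_norm_toLp] at h
  exact h

lemma L2_iterate_pd3_le_max (i : Fin 3) (f : 𝓢(EuclideanSpace ℝ (Fin 3), ℝ)) {k m : ℕ}
    (hk : k ≤ m) : L2 ((pd3 i)^[k] f) ≤ max (L2 f) (L2 ((pd3 i)^[m] f)) := by
  simpa only [← pd3_eq_lineDerivOp, ← L2_eq_norm_toLp] using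
    norm_toL2_iterate_lineDerivOp_le_max (μ := volume) (EuclideanSpace.single i (1 : ℝ)) f hk

lemma L2_dmix_le_of_tangential_le {m : ℕ} {f : 𝓢(EuclideanSpace ℝ (Fin 3), ℝ)} {R : ℝ}
    (htan : ∀ p q, p + q ≤ m → L2 (dmix p q 0 f) ≤ R) (hvert : L2 ((pd3 2)^[m] f) ≤ R)
    {a b c : ℕ} (habc : a + b + c ≤ m) : L2 (dmix a b c f) ≤ R := by
  have hvert' : L2 (dmix 0 0 (b + (a + c)) f) ≤ R :=
    (L2_iterate_pd3_le_max 2 f (by omega)).trans (max_le (htan 0 0 (by omega)) hvert)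
  refine (L2_dmix_le_max a b c f).trans (max_le (htan _ _ (by omega)) ?_)
  exact (L2_dmix_zero_le_max b (a + c) f).trans (max_le (htan _ _ (by omega)) hvert')

/-- The full `H^m` norm is controlled by the tangential `H^m_tan` norm together with the pure
vertical derivative `∂₃^m`:
`Σ_{|α|≤m} ‖∂^α f‖² ≲ Σ_{α₃=0, |α|≤m} ‖∂^α f‖² + ‖∂₃^m f‖²`. -/
theorem Hm_norm_equivalence (m : ℕ) :
    ∃ C : ℝ, 0 < C ∧ ∀ f : SchwartzMap (EuclideanSpace ℝ (Fin 3)) ℝ,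
      ∑ a ∈ multiIdx3 m, L2 (dmix a.1 a.2.1 a.2.2 f) ^ 2 ≤
        C * ((∑ a ∈ multiIdx2 m, L2 (dmix a.1 a.2 0 f) ^ 2) + L2 ((pd3 2)^[m] f) ^ 2) := by
  have hcard : 0 < (multiIdx3 m).card := Finset.card_pos.2 ⟨(0, 0, 0), by simp [multiIdx3]⟩
  refine ⟨(multiIdx3 m).card, Nat.cast_pos.2 hcard, fun f => ?_⟩
  set T := ∑ a ∈ multiIdx2 m, L2 (dmix a.1 a.2 0 f) ^ 2
  set V := L2 ((pd3 2)^[m] f) ^ 2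
  have hT : 0 ≤ T := Finset.sum_nonneg fun _ _ => sq_nonneg _
  have hV : 0 ≤ V := sq_nonneg _
  have htan : ∀ p q, p + q ≤ m → L2 (dmix p q 0 f) ≤ √(T + V) := by
    intro p q hpq
    have hmem : (p, q) ∈ multiIdx2 m := by simp [multiIdx2]; omega
    refine Real.le_sqrt_of_sq_le (le_add_of_le_of_nonneg ?_ hV)
    exact Finset.single_le_sum (f := fun r : ℕ × ℕ => L2 (dmix r.1 r.2 0 f) ^ 2) (a := (p, q))
      (fun _ _ => sq_nonneg _) hmem
  have hvert : L2 ((pd3 2)^[m] f) ≤ √(T + V) := Real.le_sqrt_of_sq_le (le_add_of_nonneg_left hT)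
  have hall : ∀ a ∈ multiIdx3 m, L2 (dmix a.1 a.2.1 a.2.2 f) ^ 2 ≤ T + V := by
    rintro ⟨a, b, c⟩ habc
    have hbound := L2_dmix_le_of_tangential_le htan hvert (Finset.mem_filter.1 habc).2
    exact (Real.le_sqrt ENNReal.toReal_nonneg (add_nonneg hT hV)).1 hbound
  calc ∑ a ∈ multiIdx3 m, L2 (dmix a.1 a.2.1 a.2.2 f) ^ 2
      ≤ (multiIdx3 m).card • (T + V) := Finset.sum_le_card_nsmul _ _ _ hall
    _ = (multiIdx3 m).card * (T + V) := nsmul_eq_mul _ _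
end
end
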